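/- Sequential shift property: suppose γ = 0, Ω = 0, κ ≥ 0, and the initial condition of the N = τ oscillators is built from an orbit segment of the standard map: (x_{i+1}, y_{i+1}) = S(x_i, y_i) for i = 1,…,τ−1, where S(x,y) = (x + y − κ sin(x − θ), y − κ sin(x − θ)). Then after one iteration of the self-consistent map, (x'_i, y'_i) = (x_{i+1}, y_{i+1}) for all i = 1,…,τ−1, and (x'_τ, y'_τ) = S(x_τ, y_τ). If moreover S^τ(x₁,y₁) = (x₁ + 2πm, y₁) for some integer m (a periodic orbit of the standard map modulo 2π in x), then the self-consistent orbit is periodic of period τ modulo 2π shifts in the x-coordinates. -/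
import Mathlib


/-- The self-consistent map with `N` oscillators, equal intensities `γ` and
parameter `Ω`, acting on states `(x, y, κ, θ)`. -/
noncomputable def scMap (N : ℕ) (γ Ω : ℝ)
    (s : (Fin N → ℝ) × (Fin N → ℝ) × ℝ × ℝ) :
    (Fin N → ℝ) × (Fin N → ℝ) × ℝ × ℝ :=
  let x := s.1; let y := s.2.1; let κ := s.2.2.1; let θ := s.2.2.2
  let η := γ * ∑ k, Real.sin (x k - θ)
  let κ' := Real.sqrt (κ ^ 2 + η ^ 2) + η
  let y' := fun k => y k - κ' * Real.sin (x k - θ)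
  let x' := fun k => x k + y' k
  let θ' := θ - Ω + (1 / κ') * (-γ * ∑ k, Real.cos (x k - θ))
  (x', y', κ', θ')

/-- The standard-like map `S(x,y) = (x + y − κ sin(x − θ), y − κ sin(x − θ))`
with fixed perturbation `κ` and phase `θ`. -/
noncomputable def stdLike (κ θ : ℝ) : ℝ × ℝ → ℝ × ℝ :=
  fun p => (p.1 + (p.2 - κ * Real.sin (p.1 - θ)), p.2 - κ * Real.sin (p.1 - θ))


lemma scMap_eq (N : ℕ) (κ θ : ℝ) (hκ : 0 ≤ κ) (x y : Fin N → ℝ) :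
    scMap N 0 0 (x, y, κ, θ)
      = (fun k => (stdLike κ θ (x k, y k)).1,
         fun k => (stdLike κ θ (x k, y k)).2, κ, θ) := by
  simp [scMap, stdLike, Real.sqrt_sq hκ]

lemma stdLike_shift (κ θ : ℝ) (m : ℤ) (p : ℝ × ℝ) :
    stdLike κ θ (p.1 + 2 * Real.pi * m, p.2)
      = ((stdLike κ θ p).1 + 2 * Real.pi * m, (stdLike κ θ p).2) := by
  have h : Real.sin (p.1 + 2 * Real.pi * m - θ) = Real.sin (p.1 - θ) := by
    have := Real.sin_add_int_mul_two_pi (p.1 - θ) m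
    rw [← this]; ring_nf
  simp [stdLike, h]; ring

/-- Sequential shift property: with `γ = 0`, `Ω = 0`, `κ ≥ 0`, and initial
oscillator data forming an orbit segment of the standard-like map `S`, one
iteration of the self-consistent map shifts the sequence by one, the last
oscillator advancing by `S`; if moreover `S^τ(x₀,y₀) = (x₀ + 2πm, y₀)`, the
self-consistent orbit is periodic of period `τ` modulo `2πm` shifts in `x`. -/
theorem scMap_sequential_shift (τ : ℕ) (hτ : 0 < τ) (κ θ : ℝ) (hκ : 0 ≤ κ)
    (x y : Fin τ → ℝ)
    (hseq : ∀ i : Fin τ, ∀ h : (i : ℕ) + 1 < τ,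
      (x ⟨(i : ℕ) + 1, h⟩, y ⟨(i : ℕ) + 1, h⟩) = stdLike κ θ (x i, y i)) :
    (∀ i : Fin τ, ∀ h : (i : ℕ) + 1 < τ,
      ((scMap τ 0 0 (x, y, κ, θ)).1 i, (scMap τ 0 0 (x, y, κ, θ)).2.1 i)
        = (x ⟨(i : ℕ) + 1, h⟩, y ⟨(i : ℕ) + 1, h⟩)) ∧
    (((scMap τ 0 0 (x, y, κ, θ)).1 ⟨τ - 1, by omega⟩,
      (scMap τ 0 0 (x, y, κ, θ)).2.1 ⟨τ - 1, by omega⟩)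
        = stdLike κ θ (x ⟨τ - 1, by omega⟩, y ⟨τ - 1, by omega⟩)) ∧
    (∀ m : ℤ,
      (stdLike κ θ)^[τ] (x ⟨0, hτ⟩, y ⟨0, hτ⟩)
          = (x ⟨0, hτ⟩ + 2 * Real.pi * m, y ⟨0, hτ⟩) →
      (scMap τ 0 0)^[τ] (x, y, κ, θ)
          = (fun k => x k + 2 * Real.pi * m, y, κ, θ)) := by
  have hmap := scMap_eq τ κ θ hκ
  refine ⟨?_, ?_, ?_⟩
  · intro i h
    rw [hseq i h, hmap x y]
  · rw [hmap x y]
  · intro m hper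
    set p : ℕ → ℝ × ℝ := fun n => (stdLike κ θ)^[n] (x ⟨0, hτ⟩, y ⟨0, hτ⟩) with hp
    have hx : ∀ n (h : n < τ), (x ⟨n, h⟩, y ⟨n, h⟩) = p n := by
      intro n
      induction n with
      | zero => intro h; simp [hp]
      | succ n ih =>
        intro h
        have hn : n < τ := by omega
        have := hseq ⟨n, hn⟩ h
        rw [this, ih hn, hp]
        simp [Function.iterate_succ_apply']
    have hshift : ∀ n, p (n + τ) = ((p n).1 + 2 * Real.pi * m, (p n).2) := by
      intro n
      induction n with
      | zero =>
        have : p τ = (x ⟨0, hτ⟩ + 2 * Real.pi * m, y ⟨0, hτ⟩) := hper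
        simpa [hp] using this
      | succ n ih =>
        have h1 : p (n + 1 + τ) = stdLike κ θ (p (n + τ)) := by
          have : n + 1 + τ = (n + τ) + 1 := by ring
          rw [this, hp]; simp [Function.iterate_succ_apply']
        have h2 : p (n + 1) = stdLike κ θ (p n) := by
          rw [hp]; simp [Function.iterate_succ_apply']
        rw [h1, ih, h2, stdLike_shift κ θ m (p n)]
    have hiter : ∀ n, (scMap τ 0 0)^[n] (x, y, κ, θ)
        = (fun k : Fin τ => (p ((k : ℕ) + n)).1,
           fun k : Fin τ => (p ((k : ℕ) + n)).2, κ, θ) := by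
      intro n
      induction n with
      | zero =>
        simp only [Function.iterate_zero, id_eq, Nat.add_zero]
        have h1 : x = fun k : Fin τ => (p (k : ℕ)).1 := by
          funext k
          exact congrArg Prod.fst (hx k k.isLt).symm ▸ rfl
        have h2 : y = fun k : Fin τ => (p (k : ℕ)).2 := by
          funext k
          exact congrArg Prod.snd (hx k k.isLt).symm ▸ rfl
        rw [← h1, ← h2]
      | succ n ih =>
        rw [Function.iterate_succ_apply', ih, hmap]
        have : ∀ k : Fin τ, stdLike κ θ ((p ((k:ℕ) + n)).1, (p ((k:ℕ) + n)).2)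
            = p ((k:ℕ) + (n + 1)) := by
          intro k
          have : (k:ℕ) + (n + 1) = ((k:ℕ) + n) + 1 := by ring
          rw [this, hp]
          simp [Function.iterate_succ_apply']
        simp only [this]
    rw [hiter τ]
    have hxk : ∀ k : Fin τ, (p ((k:ℕ) + τ)).1 = x k + 2 * Real.pi * m := by
      intro k
      rw [hshift]
      have := hx (k:ℕ) k.isLt
      simp [Fin.eta] at this
      rw [← this]
    have hyk : ∀ k : Fin τ, (p ((k:ℕ) + τ)).2 = y k := by
      intro k
      rw [hshift]
      have := hx (k:ℕ) k.isLt
      simp [Fin.eta] at this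
      rw [← this]
    simp only [hxk, hyk]
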